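/- arXiv:2301.00185 — 2 statements merged into one kernel-verified Lean document; each statement's English description precedes it below -/
import Mathlib

section
/- Let (V_n), (E_n), (F_n), (T_n) be real sequences satisfying V_{n+1} = V_n + E_n, E_{n+1} = 2E_n + 3F_n + T_n, F_{n+1} = 4F_n + 8T_n, T_{n+1} = 8T_n for all n ≥ 0. Then for all n ≥ 0: E_n = 2^n·E_0 + (3/2)(4^n − 2^n)·F_0 + ((11/6)·2^n − 3·4^n + (7/6)·8^n)·T_0, and V_n = V_0 + (2^n − 1)·E_0 + ((1/2)·4^n − (3/2)·2^n + 1)·F_0 + ((11/6)·2^n − 4^n + (1/6)·8^n − 1)·T_0. -/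
/-! The iteration matrix is triangular with eigenvalues 8, 4, 2, 1, so the system can be solved
from the bottom up: `T` is geometric, and each of `F`, `E`, `V` satisfies a first-order recurrence
whose forcing term is a combination of powers already determined one level below. -/

namespace Refinement

variable {V E F T : ℕ → ℝ}

theorem tetrahedra_eq (hT : ∀ n, T (n + 1) = 8 * T n) (n : ℕ) : T n = (8 : ℝ) ^ n * T 0 := by
  induction n with
  | zero => simp
  | succ n ih => rw [hT, ih]; ring

theorem faces_eq (hF : ∀ n, F (n + 1) = 4 * F n + 8 * T n) (hT : ∀ n, T (n + 1) = 8 * T n)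
    (n : ℕ) : F n = (4 : ℝ) ^ n * F 0 + 2 * ((8 : ℝ) ^ n - (4 : ℝ) ^ n) * T 0 := by
  induction n with
  | zero => simp
  | succ n ih => rw [hF, ih, tetrahedra_eq hT n]; ring

theorem edges_eq (hE : ∀ n, E (n + 1) = 2 * E n + 3 * F n + T n)
    (hF : ∀ n, F (n + 1) = 4 * F n + 8 * T n) (hT : ∀ n, T (n + 1) = 8 * T n) (n : ℕ) :
    E n = (2 : ℝ) ^ n * E 0 + (3 / 2) * ((4 : ℝ) ^ n - (2 : ℝ) ^ n) * F 0 +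
      ((11 / 6) * (2 : ℝ) ^ n - 3 * (4 : ℝ) ^ n + (7 / 6) * (8 : ℝ) ^ n) * T 0 := by
  induction n with
  | zero => norm_num
  | succ n ih => rw [hE, ih, faces_eq hF hT n, tetrahedra_eq hT n]; ring

theorem vertices_eq (hV : ∀ n, V (n + 1) = V n + E n)
    (hE : ∀ n, E (n + 1) = 2 * E n + 3 * F n + T n)
    (hF : ∀ n, F (n + 1) = 4 * F n + 8 * T n) (hT : ∀ n, T (n + 1) = 8 * T n) (n : ℕ) :
    V n = V 0 + ((2 : ℝ) ^ n - 1) * E 0 +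
      ((1 / 2) * (4 : ℝ) ^ n - (3 / 2) * (2 : ℝ) ^ n + 1) * F 0 +
      ((11 / 6) * (2 : ℝ) ^ n - (4 : ℝ) ^ n + (1 / 6) * (8 : ℝ) ^ n - 1) * T 0 := by
  induction n with
  | zero => norm_num
  | succ n ih => rw [hV, ih, edges_eq hE hF hT n]; ring

end Refinement

theorem refinement_closed_form
    (V E F T : ℕ → ℝ)
    (hV : ∀ n, V (n + 1) = V n + E n)
    (hE : ∀ n, E (n + 1) = 2 * E n + 3 * F n + T n)
    (hF : ∀ n, F (n + 1) = 4 * F n + 8 * T n)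
    (hT : ∀ n, T (n + 1) = 8 * T n) :
    ∀ n : ℕ,
      E n = (2 : ℝ) ^ n * E 0 + (3 / 2) * ((4 : ℝ) ^ n - (2 : ℝ) ^ n) * F 0 +
        ((11 / 6) * (2 : ℝ) ^ n - 3 * (4 : ℝ) ^ n + (7 / 6) * (8 : ℝ) ^ n) * T 0 ∧
      V n = V 0 + ((2 : ℝ) ^ n - 1) * E 0 +
        ((1 / 2) * (4 : ℝ) ^ n - (3 / 2) * (2 : ℝ) ^ n + 1) * F 0 +
        ((11 / 6) * (2 : ℝ) ^ n - (4 : ℝ) ^ n + (1 / 6) * (8 : ℝ) ^ n - 1) * T 0 :=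
  fun n => ⟨Refinement.edges_eq hE hF hT n, Refinement.vertices_eq hV hE hF hT n⟩
end

section
/- Let V, V_b, E, E_b, F, F_b, T, χ, χ_b be real numbers with V > 0 satisfying V − E + F − T = χ, V_b − E_b + F_b = χ_b, 2F − F_b = 4T and 3F_b = 2E_b, and set ē := 2E/V. Then [3(V + E + 4F + 9T) − (28T + 5F − 1)] − 3(4V + 2E) = (5ē − 22)·V − 6V_b + 13χ + 6χ_b + 1. Consequently, if (5ē − 22)·V > 6V_b − 13χ − 6χ_b − 1 (in particular for sufficiently large meshes with ē > 22/5), then 3(V + E + 4F + 9T) − (28T + 5F − 1) > 3(4V + 2E). -/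
/-! Every quantity is linear in the mesh counts. Eliminating `T`, `F` and the boundary counts with
the two Euler formulas and the incidence relations `2F - F_b = 4T`, `3F_b = 2E_b` leaves
`10E - 22V` plus boundary and topological terms, and `10E = 5ē V`. -/

theorem worsey_farin_dim_gap_eq (V Vb E Eb F Fb T chi chib : ℝ)
    (hEuler : V - E + F - T = chi) (hEulerb : Vb - Eb + Fb = chib)
    (hcomb1 : 2 * F - Fb = 4 * T) (hcomb2 : 3 * Fb = 2 * Eb) :
    (3 * (V + E + 4 * F + 9 * T) - (28 * T + 5 * F - 1)) - 3 * (4 * V + 2 * E) =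
      10 * E - 22 * V - 6 * Vb + 13 * chi + 6 * chib + 1 := by
  linear_combination 13 * hEuler + 6 * hEulerb - 3 * hcomb1 - 3 * hcomb2

theorem worsey_farin_precursor_gap
    (V Vb E Eb F Fb T chi chib ebar : ℝ) (hV : 0 < V)
    (hEuler : V - E + F - T = chi)
    (hEulerb : Vb - Eb + Fb = chib)
    (hcomb1 : 2 * F - Fb = 4 * T)
    (hcomb2 : 3 * Fb = 2 * Eb)
    (hebar : ebar = 2 * E / V) :
    (3 * (V + E + 4 * F + 9 * T) - (28 * T + 5 * F - 1)) - 3 * (4 * V + 2 * E) =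
      (5 * ebar - 22) * V - 6 * Vb + 13 * chi + 6 * chib + 1 ∧
    ((5 * ebar - 22) * V > 6 * Vb - 13 * chi - 6 * chib - 1 →
      3 * (V + E + 4 * F + 9 * T) - (28 * T + 5 * F - 1) > 3 * (4 * V + 2 * E)) := by
  have hebarV : ebar * V = 2 * E := by
    rw [hebar, div_mul_cancel₀ _ hV.ne']
  have hgap : (3 * (V + E + 4 * F + 9 * T) - (28 * T + 5 * F - 1)) - 3 * (4 * V + 2 * E) =
      (5 * ebar - 22) * V - 6 * Vb + 13 * chi + 6 * chib + 1 := by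
    rw [worsey_farin_dim_gap_eq V Vb E Eb F Fb T chi chib hEuler hEulerb hcomb1 hcomb2]
    linear_combination -5 * hebarV
  exact ⟨hgap, fun h => by linarith⟩
end
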